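/- Let h be the morphism on {0,1,2}* with h(0)=12, h(1)=102, h(2)=0. If the infinite fixed point h^ω(1) avoids 202 as a subword, then h^ω(1) avoids 0120 as a subword. -/
import Mathlib


def Occurs (u w : List (Fin 3)) : Prop := u <:+: w

def SqFree (w : List (Fin 3)) : Prop :=
  ∀ x : List (Fin 3), x ≠ [] → ¬ Occurs (x ++ x) w

def OccursInf (u : List (Fin 3)) (w : ℕ → Fin 3) : Prop :=
  ∃ i : ℕ, u = (List.range u.length).map (fun j => w (i + j))

def SqFreeInf (w : ℕ → Fin 3) : Prop :=
  ∀ x : List (Fin 3), x ≠ [] → ¬ OccursInf (x ++ x) w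


def hmor (a : Fin 3) : List (Fin 3) :=
  if a = 0 then [1, 2] else if a = 1 then [1, 0, 2] else [0]

def hiter : ℕ → List (Fin 3)
  | 0 => [1]
  | n + 1 => (hiter n).flatMap hmor

/-- the fixed point h^ω(1) as an infinite word -/
def hw (i : ℕ) : Fin 3 := (hiter (i + 1)).getD i 1

/- ### auxiliary lemmas ### -/

lemma len_flatMap (l : List (Fin 3)) : l.length ≤ (l.flatMap hmor).length := by
  induction l with
  | nil => simp
  | cons a t ih =>
    rw [List.flatMap_cons, List.length_append, List.length_cons]
    have : 1 ≤ (hmor a).length := by fin_cases a <;> simp [hmor]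
    omega

lemma hiter_head (n : ℕ) : ∃ t, hiter n = 1 :: t := by
  induction n with
  | zero => exact ⟨[], rfl⟩
  | succ n ih =>
    obtain ⟨t, ht⟩ := ih
    exact ⟨0 :: 2 :: t.flatMap hmor, by simp [hiter, ht, List.flatMap_cons, hmor]⟩

lemma len_hiter (n : ℕ) : n + 1 ≤ (hiter n).length := by
  induction n with
  | zero => simp [hiter]
  | succ n ih =>
    obtain ⟨t, ht⟩ := hiter_head n
    have h1 : t.length ≤ (t.flatMap hmor).length := len_flatMap t
    have : hiter (n+1) = (1 : Fin 3) :: 0 :: 2 :: t.flatMap hmor := by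
      simp [hiter, ht, List.flatMap_cons, hmor]
    rw [this]
    have h2 : (hiter n).length = t.length + 1 := by rw [ht]; rfl
    simp only [List.length_cons]
    omega

lemma hiter_prefix_succ (n : ℕ) : hiter n <+: hiter (n + 1) := by
  induction n with
  | zero => exact ⟨[0, 2], rfl⟩
  | succ n ih =>
    obtain ⟨r, hr⟩ := ih
    refine ⟨r.flatMap hmor, ?_⟩
    show hiter (n+1) ++ r.flatMap hmor = (hiter (n+1)).flatMap hmor
    conv_rhs => rw [← hr]
    rw [List.flatMap_append]
    rfl

lemma hiter_prefix {m n : ℕ} (h : m ≤ n) : hiter m <+: hiter n := by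
  induction n, h using Nat.le_induction with
  | base => exact List.prefix_refl _
  | succ n _ ih => exact ih.trans (hiter_prefix_succ n)

lemma getD_prefix {l l' : List (Fin 3)} (h : l <+: l') {j : ℕ} (hj : j < l.length) :
    l.getD j 1 = l'.getD j 1 := by
  obtain ⟨r, rfl⟩ := h
  rw [List.getD_append _ _ _ _ hj]

lemma hw_getD {n j : ℕ} (hj : j < (hiter n).length) : (hiter n).getD j 1 = hw j := by
  unfold hw
  rcases le_total n (j + 1) with h | h
  · exact getD_prefix (hiter_prefix h) hj
  · have hj' : j < (hiter (j + 1)).length := by have := len_hiter (j + 1); omega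
    exact (getD_prefix (hiter_prefix h) hj').symm

lemma occursInf_to_finite {u : List (Fin 3)} (h : OccursInf u hw) :
    ∃ n, u <:+: hiter n := by
  obtain ⟨i, hi⟩ := h
  set n := i + u.length with hn
  refine ⟨n, ?_⟩
  have hlen : i + u.length ≤ (hiter n).length := by have := len_hiter n; omega
  have hu : u = ((hiter n).drop i).take u.length := by
    apply List.ext_getElem
    · simp; omega
    · intro j hj _
      have hj' : j < u.length := hj
      have h1 : u[j] = hw (i + j) := by
        have := List.getElem_of_eq hi hj'
        simpa using this
      rw [h1]
      rw [List.getElem_take, List.getElem_drop]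
      have hij : i + j < (hiter n).length := by omega
      rw [← hw_getD hij, List.getD_eq_getElem _ _ hij]
  have h2 : u <+: (hiter n).drop i := hu ▸ List.take_prefix _ _
  exact h2.isInfix.trans (List.drop_suffix i (hiter n)).isInfix

lemma finite_to_occursInf {u : List (Fin 3)} {m : ℕ} (h : u <:+: hiter m) :
    OccursInf u hw := by
  obtain ⟨s, t, heq⟩ := h
  refine ⟨s.length, ?_⟩
  apply List.ext_getElem
  · simp
  · intro j hj hj2
    have hj' : j < u.length := hj
    have hlen : s.length + j < (hiter m).length := by
      rw [← heq]; simp; omega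
    have hlen2 : s.length + j < (s ++ u ++ t).length := by rw [heq]; exact hlen
    have h1 : (hiter m)[s.length + j] = u[j] := by
      rw [List.getElem_of_eq heq.symm hlen]
      rw [List.getElem_of_eq (List.append_assoc s u t) hlen2]
      rw [List.getElem_append_right (Nat.le_add_right s.length j)]
      simp [List.getElem_append, hj']
    simp only [List.getElem_map, List.getElem_range]
    rw [← hw_getD hlen, List.getD_eq_getElem _ _ hlen, h1]

/- ### the combinatorial core ### -/

lemma lemC (t : List (Fin 3)) (h : [0] <+: t.flatMap hmor) : ∃ t', t = 2 :: t' := by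
  match t with
  | [] => simp at h
  | 0 :: t' =>
    replace h : [0] <+: (1 : Fin 3) :: 2 :: t'.flatMap hmor := h
    exact absurd (List.cons_prefix_cons.mp h).1 (by decide)
  | 1 :: t' =>
    replace h : [0] <+: (1 : Fin 3) :: 0 :: 2 :: t'.flatMap hmor := h
    exact absurd (List.cons_prefix_cons.mp h).1 (by decide)
  | 2 :: t' => exact ⟨t', rfl⟩

lemma lemB (t : List (Fin 3)) (h : [1, 2, 0] <+: t.flatMap hmor) :
    ∃ t'', t = 0 :: 2 :: t'' := by
  match t with
  | [] => simp at h
  | 0 :: t' =>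
    replace h : [1, 2, 0] <+: (1 : Fin 3) :: 2 :: t'.flatMap hmor := h
    obtain ⟨-, h⟩ := List.cons_prefix_cons.mp h
    obtain ⟨-, h⟩ := List.cons_prefix_cons.mp h
    obtain ⟨t'', ht⟩ := lemC t' h
    exact ⟨t'', by rw [ht]⟩
  | 1 :: t' =>
    replace h : [1, 2, 0] <+: (1 : Fin 3) :: 0 :: 2 :: t'.flatMap hmor := h
    obtain ⟨-, h⟩ := List.cons_prefix_cons.mp h
    exact absurd (List.cons_prefix_cons.mp h).1 (by decide)
  | 2 :: t' =>
    replace h : [1, 2, 0] <+: (0 : Fin 3) :: t'.flatMap hmor := h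
    exact absurd (List.cons_prefix_cons.mp h).1 (by decide)

lemma lemA (t : List (Fin 3)) (h : [0, 1, 2, 0] <:+: t.flatMap hmor) :
    [2, 0, 2] <:+: t := by
  induction t with
  | nil => simp at h
  | cons b t ih =>
    have step : [0, 1, 2, 0] <:+: t.flatMap hmor → [2, 0, 2] <:+: b :: t := fun h' =>
      (ih h').trans (List.suffix_cons b t).isInfix
    fin_cases b
    · replace h : [0, 1, 2, 0] <:+: (1 : Fin 3) :: 2 :: t.flatMap hmor := h
      rcases List.infix_cons_iff.mp h with h | h
      · exact absurd (List.cons_prefix_cons.mp h).1 (by decide)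
      rcases List.infix_cons_iff.mp h with h | h
      · exact absurd (List.cons_prefix_cons.mp h).1 (by decide)
      · exact step h
    · replace h : [0, 1, 2, 0] <:+: (1 : Fin 3) :: 0 :: 2 :: t.flatMap hmor := h
      rcases List.infix_cons_iff.mp h with h | h
      · exact absurd (List.cons_prefix_cons.mp h).1 (by decide)
      rcases List.infix_cons_iff.mp h with h | h
      · obtain ⟨-, h⟩ := List.cons_prefix_cons.mp h
        exact absurd (List.cons_prefix_cons.mp h).1 (by decide)
      rcases List.infix_cons_iff.mp h with h | h
      · exact absurd (List.cons_prefix_cons.mp h).1 (by decide)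
      · exact step h
    · replace h : [0, 1, 2, 0] <:+: (0 : Fin 3) :: t.flatMap hmor := h
      rcases List.infix_cons_iff.mp h with h | h
      · obtain ⟨-, h⟩ := List.cons_prefix_cons.mp h
        obtain ⟨t'', ht⟩ := lemB t h
        rw [ht]
        exact ⟨[], t'', rfl⟩
      · exact step h

theorem avoids_202_implies_avoids_0120 (h202 : ¬ OccursInf [2,0,2] hw) :
    ¬ OccursInf [0,1,2,0] hw := by
  intro h0120
  obtain ⟨n, hn⟩ := occursInf_to_finite h0120
  match n with
  | 0 =>
    have := hn.length_le
    simp [hiter] at this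
  | m + 1 =>
    have h' : [0, 1, 2, 0] <:+: (hiter m).flatMap hmor := hn
    exact h202 (finite_to_occursInf (lemA (hiter m) h'))
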